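/- The decision boundary { x : TP(x) = 1/2 } of the tied prototype model with 0 < σ_F < σ_B is the sphere of radius r around p, where r² = 2(ln(p_F/p_B) + d ln(σ_B/σ_F)) / (1/σ_F² − 1/σ_B²), provided ln(p_F/p_B) + d ln(σ_B/σ_F) > 0. -/

import Mathlib

/-
The posterior equals `1/2` exactly where the two weighted densities agree. Taking logarithms,
the normalising constants contribute `d log(σ_B/σ_F)` and the exponents `‖x - p‖²/2 · (1/σ_F² - 1/σ_B²)`,
so the boundary is a level set of `‖x - p‖²`; since `σ_F < σ_B` the coefficient is positive,
and that level is `r²`.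
-/

open Real

/-- Isotropic Gaussian density `φ(p,σ;x)` on `ℝ^d`. -/
noncomputable def gaussPdf (d : ℕ) (p : EuclideanSpace ℝ (Fin d)) (σ : ℝ)
    (x : EuclideanSpace ℝ (Fin d)) : ℝ :=
  (2 * π * σ ^ 2) ^ (-(d : ℝ) / 2) * Real.exp (-‖x - p‖ ^ 2 / (2 * σ ^ 2))

lemma div_add_eq_half_iff {K : Type*} [Field K] [NeZero (2 : K)] {a b : K} (hab : a + b ≠ 0) :
    a / (a + b) = 1 / 2 ↔ a = b := by
  rw [div_eq_div_iff hab two_ne_zero]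
  constructor <;> intro h <;> linear_combination h

section gaussPdf

variable {d : ℕ} {p : EuclideanSpace ℝ (Fin d)} {σ : ℝ}

lemma gaussPdf_pos (hσ : σ ≠ 0) (x : EuclideanSpace ℝ (Fin d)) : 0 < gaussPdf d p σ x := by
  unfold gaussPdf
  have : 0 < 2 * π * σ ^ 2 := by positivity
  positivity

lemma log_gaussPdf (hσ : σ ≠ 0) (x : EuclideanSpace ℝ (Fin d)) :
    Real.log (gaussPdf d p σ x)
      = -(d / 2) * Real.log (2 * π) - d * Real.log σ - ‖x - p‖ ^ 2 / (2 * σ ^ 2) := by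
  have h2π : 0 < 2 * π := by positivity
  rw [gaussPdf, Real.log_mul (by positivity) (Real.exp_pos _).ne', Real.log_rpow (by positivity),
    Real.log_exp, Real.log_mul h2π.ne' (by positivity), Real.log_pow]
  push_cast
  ring

lemma mul_gaussPdf_eq_mul_gaussPdf_iff {σF σB pF pB : ℝ} (hF : σF ≠ 0) (hB : σB ≠ 0)
    (hpF : 0 < pF) (hpB : 0 < pB) (x : EuclideanSpace ℝ (Fin d)) :
    pF * gaussPdf d p σF x = pB * gaussPdf d p σB x ↔
      ‖x - p‖ ^ 2 * (1 / σF ^ 2 - 1 / σB ^ 2)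
        = 2 * (Real.log (pF / pB) + d * Real.log (σB / σF)) := by
  have hφF := gaussPdf_pos (p := p) hF x
  have hφB := gaussPdf_pos (p := p) hB x
  rw [← Real.log_injOn_pos.eq_iff (mul_pos hpF hφF) (mul_pos hpB hφB),
    Real.log_mul hpF.ne' hφF.ne', Real.log_mul hpB.ne' hφB.ne', log_gaussPdf hF,
    log_gaussPdf hB, Real.log_div hpF.ne' hpB.ne', Real.log_div hB hF]
  constructor <;> intro h <;> field_simp at h ⊢ <;> linear_combination -h

end gaussPdf

theorem tied_posterior_decision_boundary_general (d : ℕ) (p : EuclideanSpace ℝ (Fin d))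
    (σF σB pF pB r : ℝ) (hF : 0 < σF) (hFB : σF < σB) (hpF : 0 < pF) (hpB : 0 < pB)
    (hr : 0 ≤ r)
    (hr2 : r ^ 2 = 2 * (Real.log (pF / pB) + d * Real.log (σB / σF)) /
      (1 / σF ^ 2 - 1 / σB ^ 2)) :
    {x : EuclideanSpace ℝ (Fin d) |
        pF * gaussPdf d p σF x / (pF * gaussPdf d p σF x + pB * gaussPdf d p σB x)
          = 1 / 2} = Metric.sphere p r := by
  have hB : 0 < σB := hF.trans hFB
  have hcoef : 0 < 1 / σF ^ 2 - 1 / σB ^ 2 :=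
    sub_pos.2 (one_div_lt_one_div_of_lt (by positivity) (pow_lt_pow_left₀ hFB hF.le two_ne_zero))
  ext x
  have hsum : 0 < pF * gaussPdf d p σF x + pB * gaussPdf d p σB x :=
    add_pos (mul_pos hpF (gaussPdf_pos hF.ne' x)) (mul_pos hpB (gaussPdf_pos hB.ne' x))
  rw [Set.mem_ofPred_eq, div_add_eq_half_iff hsum.ne',
    mul_gaussPdf_eq_mul_gaussPdf_iff hF.ne' hB.ne' hpF hpB, ← eq_div_iff hcoef.ne', ← hr2,
    sq_eq_sq₀ (norm_nonneg _) hr, Metric.mem_sphere, dist_eq_norm]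

theorem tied_posterior_decision_boundary (d : ℕ) (p : EuclideanSpace ℝ (Fin d))
    (σF σB pF pB r : ℝ) (hF : 0 < σF) (hFB : σF < σB) (hpF : 0 < pF) (hpB : 0 < pB)
    (hpos : 0 < Real.log (pF / pB) + d * Real.log (σB / σF)) (hr : 0 ≤ r)
    (hr2 : r ^ 2 = 2 * (Real.log (pF / pB) + d * Real.log (σB / σF)) /
      (1 / σF ^ 2 - 1 / σB ^ 2)) :
    {x : EuclideanSpace ℝ (Fin d) |
        pF * gaussPdf d p σF x / (pF * gaussPdf d p σF x + pB * gaussPdf d p σB x)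
          = 1 / 2} = Metric.sphere p r :=
  tied_posterior_decision_boundary_general d p σF σB pF pB r hF hFB hpF hpB hr hr2
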